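/- Assume h is upper semi-continuous with respect to the weak-* topology on M_T(X). Let φ ∈ C(X), let (β_n) be a sequence of positive reals with β_n → ∞, and for each n let μ_n ∈ M_T(X) be an equilibrium state for β_n φ. If (μ_n) converges to μ∞ ∈ M_T(X) in the weak-* topology, then h(μ∞) = h_∞(φ); that is, every zero-temperature limit of φ attains the maximal value of h among φ-maximizing measures. -/

import Mathlib

open MeasureTheory Filter Set
open scoped NNReal ENNReal

variable {X : Type*} [MetricSpace X] [CompactSpace X] [Nonempty X]
  [MeasurableSpace X] [BorelSpace X]

/-- The set `M_T(X)` of `T`-invariant Borel probability measures on `X`,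
equipped (as a subset of `ProbabilityMeasure X`) with the weak-* topology. -/
def InvMeas (T : X → X) : Set (ProbabilityMeasure X) :=
  {μ | (μ : Measure X).map T = (μ : Measure X)}

/-- The pressure `P(φ) = sup { h(μ) + ∫ φ dμ : μ ∈ M_T(X) }`. -/
noncomputable def press (T : X → X) (h : ProbabilityMeasure X → ℝ) (φ : C(X, ℝ)) : ℝ :=
  sSup ((fun μ : ProbabilityMeasure X => h μ + ∫ x, φ x ∂(μ : Measure X)) '' InvMeas T)

/-- `μ` is an equilibrium state for `φ`: `μ ∈ M_T(X)` and `h(μ) + ∫ φ dμ = P(φ)`. -/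
def IsEquilib (T : X → X) (h : ProbabilityMeasure X → ℝ) (φ : C(X, ℝ))
    (μ : ProbabilityMeasure X) : Prop :=
  μ ∈ InvMeas T ∧ h μ + ∫ x, φ x ∂(μ : Measure X) = press T h φ

/-- `Max(φ) = sup { ∫ φ dν : ν ∈ M_T(X) }`. -/
noncomputable def MaxInt (T : X → X) (φ : C(X, ℝ)) : ℝ :=
  sSup ((fun μ : ProbabilityMeasure X => ∫ x, φ x ∂(μ : Measure X)) '' InvMeas T)

/-- `h_∞(φ) = sup { h(μ) : μ ∈ M_T(X), ∫ φ dμ = Max(φ) }`. -/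
noncomputable def hInfty (T : X → X) (h : ProbabilityMeasure X → ℝ) (φ : C(X, ℝ)) : ℝ :=
  sSup (h '' {μ ∈ InvMeas T | ∫ x, φ x ∂(μ : Measure X) = MaxInt T φ})

/-!
Comparing the equilibrium state `μₙ` of `βₙ φ` with any invariant `ν` gives
`h ν + βₙ ∫ φ dν ≤ h μₙ + βₙ ∫ φ dμₙ`. Since `h` is bounded, dividing by `βₙ → ∞` shows that the
limit `μ∞` maximizes `∫ φ`; if `ν` is itself maximizing, the same inequality gives
`h ν ≤ h μₙ` for every `n`, and upper semicontinuity passes this to `h ν ≤ h μ∞`.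
-/

open Topology

theorem UpperSemicontinuousWithinAt.le_of_tendsto {α ι γ : Type*} [TopologicalSpace α]
    [LinearOrder γ] {f : α → γ} {s : Set α} {x : α} {l : Filter ι} [l.NeBot] {u : ι → α}
    {a : γ} (hf : UpperSemicontinuousWithinAt f s x) (hu : Tendsto u l (𝓝[s] x))
    (ha : ∀ᶠ i in l, a ≤ f (u i)) : a ≤ f x := by
  by_contra! hlt
  obtain ⟨i, hle, hlt'⟩ := (ha.and (hu.eventually (hf a hlt))).exists
  exact hle.not_gt hlt'

theorem bddAbove_image_of_forall_abs_le {α : Type*} {f : α → ℝ} {s : Set α} {C : ℝ}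
    (hC : ∀ x ∈ s, |f x| ≤ C) : BddAbove (f '' s) :=
  ⟨C, by rintro _ ⟨x, hx, rfl⟩; exact (le_abs_self _).trans (hC x hx)⟩

theorem ContinuousMap.integral_le_norm {α : Type*} [TopologicalSpace α] [CompactSpace α]
    [MeasurableSpace α] [OpensMeasurableSpace α] (f : C(α, ℝ)) (μ : ProbabilityMeasure α) :
    ∫ x, f x ∂(μ : Measure α) ≤ ‖f‖ := by
  have := (BoundedContinuousFunction.mkOfCompact f).norm_integral_le_norm (μ : Measure α)
  rw [BoundedContinuousFunction.norm_mkOfCompact] at this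
  exact (le_abs_self _).trans (by simpa [Real.norm_eq_abs] using this)

theorem ContinuousMap.integral_smul {α : Type*} [TopologicalSpace α] [MeasurableSpace α]
    (β : ℝ) (f : C(α, ℝ)) (μ : Measure α) :
    ∫ x, (β • f) x ∂μ = β * ∫ x, f x ∂μ := by
  simp only [ContinuousMap.smul_apply, smul_eq_mul, integral_const_mul]

theorem bddAbove_integral_image {α : Type*} [TopologicalSpace α] [CompactSpace α]
    [MeasurableSpace α] [OpensMeasurableSpace α] (f : C(α, ℝ)) (S : Set (ProbabilityMeasure α)) :
    BddAbove ((fun μ : ProbabilityMeasure α => ∫ x, f x ∂(μ : Measure α)) '' S) :=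
  ⟨‖f‖, by rintro _ ⟨μ, -, rfl⟩; exact ContinuousMap.integral_le_norm f μ⟩

section ZeroTemperature

variable {X : Type*} [MetricSpace X] [CompactSpace X] [MeasurableSpace X] [OpensMeasurableSpace X]
  {T : X → X} {h : ProbabilityMeasure X → ℝ} {φ : C(X, ℝ)}

theorem integral_le_maxInt {ν : ProbabilityMeasure X} (hν : ν ∈ InvMeas T) :
    ∫ x, φ x ∂(ν : Measure X) ≤ MaxInt T φ :=
  le_csSup (bddAbove_integral_image φ _) (mem_image_of_mem _ hν)

theorem add_integral_le_press (hbdd : BddAbove (h '' InvMeas T)) {ν : ProbabilityMeasure X}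
    (hν : ν ∈ InvMeas T) : h ν + ∫ x, φ x ∂(ν : Measure X) ≤ press T h φ := by
  obtain ⟨C, hC⟩ := hbdd
  refine le_csSup ⟨C + ‖φ‖, ?_⟩ (mem_image_of_mem _ hν)
  rintro _ ⟨μ, hμ, rfl⟩
  exact add_le_add (hC (mem_image_of_mem h hμ)) (ContinuousMap.integral_le_norm φ μ)

theorem IsEquilib.add_mul_integral_le (hbdd : BddAbove (h '' InvMeas T)) {β : ℝ}
    {μ ν : ProbabilityMeasure X} (hμ : IsEquilib T h (β • φ) μ) (hν : ν ∈ InvMeas T) :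
    h ν + β * ∫ x, φ x ∂(ν : Measure X) ≤ h μ + β * ∫ x, φ x ∂(μ : Measure X) := by
  have := add_integral_le_press (φ := β • φ) hbdd hν
  rwa [← hμ.2, ContinuousMap.integral_smul, ContinuousMap.integral_smul] at this

theorem IsEquilib.le_of_integral_eq_maxInt (hbdd : BddAbove (h '' InvMeas T)) {β : ℝ}
    (hβ : 0 ≤ β) {μ ν : ProbabilityMeasure X} (hμ : IsEquilib T h (β • φ) μ)
    (hν : ν ∈ InvMeas T) (hνmax : ∫ x, φ x ∂(ν : Measure X) = MaxInt T φ) : h ν ≤ h μ := by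
  have hcmp := hμ.add_mul_integral_le hbdd hν
  have hμν : β * ∫ x, φ x ∂(μ : Measure X) ≤ β * ∫ x, φ x ∂(ν : Measure X) :=
    mul_le_mul_of_nonneg_left (hνmax ▸ integral_le_maxInt hμ.1) hβ
  linarith

theorem integral_eq_maxInt_of_tendsto_isEquilib {C : ℝ} (hC : ∀ μ ∈ InvMeas T, |h μ| ≤ C)
    {β : ℕ → ℝ} (hβpos : ∀ n, 0 < β n) (hβtop : Tendsto β atTop atTop)
    {μ : ℕ → ProbabilityMeasure X} (hμ : ∀ n, IsEquilib T h (β n • φ) (μ n))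
    {μlim : ProbabilityMeasure X} (hμlim : μlim ∈ InvMeas T) (hconv : Tendsto μ atTop (𝓝 μlim)) :
    ∫ x, φ x ∂(μlim : Measure X) = MaxInt T φ := by
  have hbdd := bddAbove_image_of_forall_abs_le hC
  have hint : Tendsto (fun n => ∫ x, φ x ∂(μ n : Measure X)) atTop
      (𝓝 (∫ x, φ x ∂(μlim : Measure X))) := by
    simpa using ProbabilityMeasure.tendsto_iff_forall_integral_tendsto.mp hconv
      (BoundedContinuousFunction.mkOfCompact φ)
  refine (integral_le_maxInt hμlim).antisymm (csSup_le ⟨_, mem_image_of_mem _ hμlim⟩ ?_)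
  rintro _ ⟨ν, hν, rfl⟩
  -- `βₙ (∫ φ dν - ∫ φ dμₙ) ≤ h μₙ - h ν ≤ 2C`
  have hgap : ∀ n, ∫ x, φ x ∂(ν : Measure X) - 2 * C / β n ≤ ∫ x, φ x ∂(μ n : Measure X) := by
    intro n
    have hcmp := (hμ n).add_mul_integral_le hbdd hν
    have hspread : h (μ n) - h ν ≤ 2 * C := by
      linarith [(abs_le.mp (hC ν hν)).1, (abs_le.mp (hC _ (hμ n).1)).2]
    have : ∫ x, φ x ∂(ν : Measure X) - ∫ x, φ x ∂(μ n : Measure X) ≤ 2 * C / β n := by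
      rw [le_div_iff₀ (hβpos n)]
      linarith
    linarith
  have hlim : Tendsto (fun n => ∫ x, φ x ∂(ν : Measure X) - 2 * C / β n) atTop
      (𝓝 (∫ x, φ x ∂(ν : Measure X))) := by
    simpa using tendsto_const_nhds.sub (tendsto_const_nhds.div_atTop hβtop)
  exact le_of_tendsto_of_tendsto' hlim hint hgap

end ZeroTemperature

theorem stmt19_general
    (T : X → X)
    (h : ProbabilityMeasure X → ℝ)
    (hbd : ∃ C : ℝ, ∀ μ ∈ InvMeas T, |h μ| ≤ C)
    (husc : UpperSemicontinuousOn h (InvMeas T))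
    (φ : C(X, ℝ)) (βseq : ℕ → ℝ) (hβpos : ∀ n, 0 < βseq n)
    (hβtop : Tendsto βseq atTop atTop)
    (μseq : ℕ → ProbabilityMeasure X)
    (hμeq : ∀ n, IsEquilib T h (βseq n • φ) (μseq n))
    (μinf : ProbabilityMeasure X) (hμinf : μinf ∈ InvMeas T)
    (hconv : Tendsto μseq atTop (nhds μinf)) :
    h μinf = hInfty T h φ := by
  rw [hInfty]
  obtain ⟨C, hC⟩ := hbd
  have hbdd := bddAbove_image_of_forall_abs_le hC
  have hmax := integral_eq_maxInt_of_tendsto_isEquilib hC hβpos hβtop hμeq hμinf hconv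
  have hconv' : Tendsto μseq atTop (𝓝[InvMeas T] μinf) :=
    tendsto_nhdsWithin_of_tendsto_nhds_of_eventually_within _ hconv
      (Eventually.of_forall fun n => (hμeq n).1)
  refine (IsGreatest.csSup_eq ?_).symm
  refine ⟨mem_image_of_mem h ⟨hμinf, hmax⟩, ?_⟩
  rintro _ ⟨ν, ⟨hν, hνmax⟩, rfl⟩
  exact (husc.upperSemicontinuousWithinAt hμinf).le_of_tendsto hconv'
    (Eventually.of_forall fun n => (hμeq n).le_of_integral_eq_maxInt hbdd (hβpos n).le hν hνmax)

theorem stmt19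
    (T : X → X) (hT : Continuous T) (hne : (InvMeas T).Nonempty)
    (h : ProbabilityMeasure X → ℝ)
    (hbd : ∃ C : ℝ, ∀ μ ∈ InvMeas T, |h μ| ≤ C)
    (haff : ∀ μ ν : ProbabilityMeasure X, μ ∈ InvMeas T → ν ∈ InvMeas T →
      ∀ t : ℝ, 0 ≤ t → t ≤ 1 → ∀ σ : ProbabilityMeasure X,
        (σ : Measure X) =
          ENNReal.ofReal t • (μ : Measure X) + ENNReal.ofReal (1 - t) • (ν : Measure X) →
        h σ = t * h μ + (1 - t) * h ν)
    (husc : UpperSemicontinuousOn h (InvMeas T))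
    (φ : C(X, ℝ)) (βseq : ℕ → ℝ) (hβpos : ∀ n, 0 < βseq n)
    (hβtop : Tendsto βseq atTop atTop)
    (μseq : ℕ → ProbabilityMeasure X)
    (hμeq : ∀ n, IsEquilib T h (βseq n • φ) (μseq n))
    (μinf : ProbabilityMeasure X) (hμinf : μinf ∈ InvMeas T)
    (hconv : Tendsto μseq atTop (nhds μinf)) :
    h μinf = hInfty T h φ :=
  stmt19_general T h hbd husc φ βseq hβpos hβtop μseq hμeq μinf hμinf hconv
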